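/- Barbalat-type conclusion for the adaptive scalar system: under the hypotheses above with eₜ bounded, e(t) → 0 as t → ∞. -/

import Mathlib

/-!
The Lyapunov function V = αγ e² + β (K* − K)² satisfies V' = 2αγ a e² ≤ 0 along solutions, so
V ≤ V(0). This bounds e and K* − K, hence ė, so e is Lipschitz on [0, ∞); integrating V' gives
∫₀ᵀ e² ≤ V(0) / (2αγ|a|), so e ∈ L²(0, ∞). Barbalat's lemma concludes: if a uniformly continuous f
had ‖f(T)‖ ≥ ε for arbitrarily large T, then ‖f‖ ≥ ε/2 on [T, T + δ] for a fixed δ, and these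
windows would carry a fixed amount of ∫ ‖f‖ⁿ arbitrarily far out, contradicting integrability.
-/

open Filter Set MeasureTheory Topology NNReal

theorem tendsto_zero_of_uniformContinuousOn_of_integrableOn_norm_pow {E : Type*}
    [NormedAddCommGroup E] {f : ℝ → E} {a : ℝ} {n : ℕ} (hf : UniformContinuousOn f (Ici a))
    (hi : IntegrableOn (fun x => ‖f x‖ ^ n) (Ioi a)) : Tendsto f atTop (𝓝 0) := by
  rw [Metric.tendsto_atTop]
  intro ε hε
  obtain ⟨δ, hδ, hfδ⟩ := Metric.uniformContinuousOn_iff_le.mp hf (ε / 2) (half_pos hε)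
  set F : ℝ → ℝ := fun T => ∫ x in a..T, ‖f x‖ ^ n
  have hF : Tendsto F atTop (𝓝 (∫ x in Ioi a, ‖f x‖ ^ n)) :=
    intervalIntegral_tendsto_integral_Ioi a hi tendsto_id
  have hFδ : Tendsto (fun T => F (T + δ)) atTop (𝓝 (∫ x in Ioi a, ‖f x‖ ^ n)) :=
    intervalIntegral_tendsto_integral_Ioi a hi (tendsto_atTop_add_const_right _ δ tendsto_id)
  have hwindow : Tendsto (fun T => F (T + δ) - F T) atTop (𝓝 0) := by
    simpa using hFδ.sub hF
  obtain ⟨N, hN⟩ := Metric.tendsto_atTop.mp hwindow (δ * (ε / 2) ^ n) (by positivity)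
  refine ⟨max N a, fun T hT => ?_⟩
  rw [dist_zero_right]
  by_contra! hfT
  have hTa : a ≤ T := le_of_max_le_right hT
  have hint : ∀ b ≥ a, IntervalIntegrable (fun x => ‖f x‖ ^ n) volume a b := fun b hb =>
    (intervalIntegrable_iff_integrableOn_Ioc_of_le hb).mpr (hi.mono_set Ioc_subset_Ioi_self)
  have hlarge : ∀ x ∈ Icc T (T + δ), (ε / 2) ^ n ≤ ‖f x‖ ^ n := by
    intro x hx
    have hxT : dist x T ≤ δ := by
      rw [Real.dist_eq, abs_of_nonneg (by linarith [hx.1])]; linarith [hx.2]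
    have hclose : ‖f x - f T‖ ≤ ε / 2 :=
      dist_eq_norm (f x) (f T) ▸ hfδ x (hTa.trans hx.1) T hTa hxT
    have hnorm : ‖f T‖ - ‖f x‖ ≤ ‖f x - f T‖ := norm_sub_rev (f T) (f x) ▸ norm_sub_norm_le _ _
    exact pow_le_pow_left₀ (by positivity) (by linarith) n
  have hlow : δ * (ε / 2) ^ n ≤ F (T + δ) - F T := by
    rw [intervalIntegral.integral_interval_sub_left (hint _ (by linarith)) (hint _ hTa)]
    simpa using intervalIntegral.integral_mono_on (by linarith) intervalIntegrable_const
      ((hint _ hTa).symm.trans (hint _ (by linarith))) hlarge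
  have hsmall := hN T (le_of_max_le_left hT)
  rw [Real.dist_eq, sub_zero] at hsmall
  linarith [le_abs_self (F (T + δ) - F T)]

theorem abs_le_sqrt_div_of_mul_sq_le {c x B : ℝ} (hc : 0 < c) (h : c * x ^ 2 ≤ B) :
    |x| ≤ √(B / c) :=
  Real.abs_le_sqrt (by rw [le_div_iff₀ hc]; linarith)

namespace AdaptiveSystem

variable {a α γ β Kstar : ℝ} {et e K : ℝ → ℝ}

def lyapunov (α γ β Kstar : ℝ) (e K : ℝ → ℝ) (t : ℝ) : ℝ :=
  α * γ * e t ^ 2 + β * (Kstar - K t) ^ 2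

theorem lyapunov_nonneg (hαγ : 0 ≤ α * γ) (hβ : 0 ≤ β) (t : ℝ) :
    0 ≤ lyapunov α γ β Kstar e K t := by
  unfold lyapunov; positivity

theorem hasDerivAt_lyapunov {t : ℝ} (he : HasDerivAt e (a * e t + β * (Kstar - K t) * et t) t)
    (hK : HasDerivAt K (α * γ * e t * et t) t) :
    HasDerivAt (lyapunov α γ β Kstar e K) (2 * α * γ * a * e t ^ 2) t := by
  refine (((he.pow 2).const_mul (α * γ)).add
    (((hK.const_sub Kstar).pow 2).const_mul β)).congr_deriv ?_
  ring

theorem lyapunov_sub_lyapunov_zero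
    (he : ∀ t ≥ 0, HasDerivAt e (a * e t + β * (Kstar - K t) * et t) t)
    (hK : ∀ t ≥ 0, HasDerivAt K (α * γ * e t * et t) t) {T : ℝ} (hT : 0 ≤ T) :
    lyapunov α γ β Kstar e K T - lyapunov α γ β Kstar e K 0 =
      2 * α * γ * a * ∫ t in 0..T, e t ^ 2 := by
  have he2 : ContinuousOn (fun t => e t ^ 2) (uIcc 0 T) := by
    rw [uIcc_of_le hT]
    exact (fun t ht => ((he t ht.1).continuousAt.pow 2).continuousWithinAt)
  rw [← intervalIntegral.integral_const_mul]
  refine (intervalIntegral.integral_eq_sub_of_hasDerivAt (fun t ht => ?_)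
    (he2.intervalIntegrable.const_mul _)).symm
  rw [uIcc_of_le hT] at ht
  exact hasDerivAt_lyapunov (he t ht.1) (hK t ht.1)

theorem lyapunov_le_lyapunov_zero (ha : a ≤ 0) (hαγ : 0 ≤ α * γ)
    (he : ∀ t ≥ 0, HasDerivAt e (a * e t + β * (Kstar - K t) * et t) t)
    (hK : ∀ t ≥ 0, HasDerivAt K (α * γ * e t * et t) t) {T : ℝ} (hT : 0 ≤ T) :
    lyapunov α γ β Kstar e K T ≤ lyapunov α γ β Kstar e K 0 := by
  have hI : 0 ≤ ∫ t in 0..T, e t ^ 2 := intervalIntegral.integral_nonneg hT fun t _ => sq_nonneg _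
  have hc : 2 * α * γ * a ≤ 0 := by nlinarith
  linarith [lyapunov_sub_lyapunov_zero he hK hT, mul_nonpos_of_nonpos_of_nonneg hc hI]

theorem integral_sq_le_lyapunov_zero (ha : a < 0) (hαγ : 0 < α * γ) (hβ : 0 ≤ β)
    (he : ∀ t ≥ 0, HasDerivAt e (a * e t + β * (Kstar - K t) * et t) t)
    (hK : ∀ t ≥ 0, HasDerivAt K (α * γ * e t * et t) t) {T : ℝ} (hT : 0 ≤ T) :
    ∫ t in 0..T, e t ^ 2 ≤ lyapunov α γ β Kstar e K 0 / (2 * α * γ * -a) := by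
  rw [le_div_iff₀ (by nlinarith)]
  linarith [lyapunov_sub_lyapunov_zero he hK hT,
    lyapunov_nonneg (Kstar := Kstar) (e := e) (K := K) hαγ.le hβ T]

theorem integrableOn_Ioi_norm_sq (ha : a < 0) (hαγ : 0 < α * γ) (hβ : 0 ≤ β)
    (he : ∀ t ≥ 0, HasDerivAt e (a * e t + β * (Kstar - K t) * et t) t)
    (hK : ∀ t ≥ 0, HasDerivAt K (α * γ * e t * et t) t) :
    IntegrableOn (fun t => ‖e t‖ ^ 2) (Ioi 0) := by
  have hcont : ContinuousOn (fun t => ‖e t‖ ^ 2) (Ici 0) :=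
    fun t ht => ((he t ht).continuousAt.norm.pow 2).continuousWithinAt
  refine integrableOn_Ioi_of_intervalIntegral_norm_bounded
    (lyapunov α γ β Kstar e K 0 / (2 * α * γ * -a)) 0
    (fun T => (hcont.mono Icc_subset_Ici_self).integrableOn_Icc.mono_set Ioc_subset_Icc_self)
    tendsto_id ((eventually_ge_atTop 0).mono fun T hT => ?_)
  simpa only [id, norm_pow, norm_norm, Real.norm_eq_abs, sq_abs]
    using integral_sq_le_lyapunov_zero ha hαγ hβ he hK hT

theorem exists_lipschitzOnWith_Ici (ha : a ≤ 0) (hαγ : 0 < α * γ) (hβ : 0 < β)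
    (hetb : ∃ Cb, ∀ t, |et t| ≤ Cb)
    (he : ∀ t ≥ 0, HasDerivAt e (a * e t + β * (Kstar - K t) * et t) t)
    (hK : ∀ t ≥ 0, HasDerivAt K (α * γ * e t * et t) t) :
    ∃ L, LipschitzOnWith L e (Ici 0) := by
  obtain ⟨Cb, hCb⟩ := hetb
  set V₀ := lyapunov α γ β Kstar e K 0
  have hV : ∀ t ≥ 0, α * γ * e t ^ 2 + β * (Kstar - K t) ^ 2 ≤ V₀ :=
    fun t ht => lyapunov_le_lyapunov_zero ha hαγ.le he hK ht
  have he_le : ∀ t ≥ 0, |e t| ≤ √(V₀ / (α * γ)) := fun t ht =>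
    abs_le_sqrt_div_of_mul_sq_le hαγ (by nlinarith [hV t ht, sq_nonneg (Kstar - K t)])
  have hK_le : ∀ t ≥ 0, |Kstar - K t| ≤ √(V₀ / β) := fun t ht =>
    abs_le_sqrt_div_of_mul_sq_le hβ (by nlinarith [hV t ht, sq_nonneg (e t)])
  have hderiv : ∀ t ≥ 0, |a * e t + β * (Kstar - K t) * et t| ≤
      |a| * √(V₀ / (α * γ)) + β * √(V₀ / β) * Cb := by
    intro t ht
    calc |a * e t + β * (Kstar - K t) * et t|
        ≤ |a| * |e t| + β * |Kstar - K t| * |et t| := by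
          simpa only [abs_mul, abs_of_pos hβ]
            using abs_add_le (a * e t) (β * (Kstar - K t) * et t)
      _ ≤ |a| * √(V₀ / (α * γ)) + β * √(V₀ / β) * Cb := by
          gcongr
          exacts [he_le t ht, hK_le t ht, hCb t]
  refine ⟨(|a| * √(V₀ / (α * γ)) + β * √(V₀ / β) * Cb).toNNReal,
    (convex_Ici 0).lipschitzOnWith_of_nnnorm_hasDerivWithin_le
      (fun t ht => (he t ht).hasDerivWithinAt) fun t ht => ?_⟩
  rw [← NNReal.coe_le_coe, coe_nnnorm]
  exact (hderiv t ht).trans (Real.le_coe_toNNReal _)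

end AdaptiveSystem

theorem stmt_14_general (a α γ β Kstar : ℝ) (ha : a < 0) (hα : 0 < α) (hγ : 0 < γ) (hβ : 0 < β)
    (et e K : ℝ → ℝ) (hetb : ∃ Cb, ∀ t, |et t| ≤ Cb)
    (he : ∀ t ≥ 0, HasDerivAt e (a * e t + β * (Kstar - K t) * et t) t)
    (hK : ∀ t ≥ 0, HasDerivAt K (α * γ * e t * et t) t) :
    Tendsto e atTop (nhds 0) := by
  have hαγ : 0 < α * γ := mul_pos hα hγ
  obtain ⟨L, hL⟩ := AdaptiveSystem.exists_lipschitzOnWith_Ici ha.le hαγ hβ hetb he hK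
  exact tendsto_zero_of_uniformContinuousOn_of_integrableOn_norm_pow hL.uniformContinuousOn
    (AdaptiveSystem.integrableOn_Ioi_norm_sq ha hαγ hβ.le he hK)

/-- Barbalat-type conclusion: the adaptive tracking error converges to zero. -/
theorem stmt_14 (a α γ β Kstar : ℝ) (ha : a < 0) (hα : 0 < α) (hγ : 0 < γ) (hβ : 0 < β)
    (et e K : ℝ → ℝ) (het : Continuous et) (hetb : ∃ Cb, ∀ t, |et t| ≤ Cb)
    (he : ∀ t ≥ 0, HasDerivAt e (a * e t + β * (Kstar - K t) * et t) t)
    (hK : ∀ t ≥ 0, HasDerivAt K (α * γ * e t * et t) t) :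
    Tendsto e atTop (nhds 0) :=
  stmt_14_general a α γ β Kstar ha hα hγ hβ et e K hetb he hK
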